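/- Let r ≥ s ≥ 1 be positive integers (s ∣ r is not assumed); then for all integers m, m' one has ⌈(m − m')/s⌉ = ⌈(⌈m·r/s⌉ − ⌈m'·r/s⌉)/r⌉. -/
import Mathlib


/-- Let `r ≥ s ≥ 1` be integers. Then for all integers `m, m'` one has
`⌈(m − m')/s⌉ = ⌈(⌈m·r/s⌉ − ⌈m'·r/s⌉)/r⌉`. -/
theorem ceil_div_sub_eq_ceil_div_of_ceil_mul
    (r s : ℤ) (hs : 1 ≤ s) (hsr : s ≤ r) (m m' : ℤ) :
    ⌈((m - m' : ℤ) : ℚ) / (s : ℚ)⌉ =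
      ⌈(((⌈((m * r : ℤ) : ℚ) / (s : ℚ)⌉ - ⌈((m' * r : ℤ) : ℚ) / (s : ℚ)⌉ : ℤ)) : ℚ) / (r : ℚ)⌉ := by
  have hsQ : (0:ℚ) < (s:ℚ) := by exact_mod_cast hs
  have hrZ : (1:ℤ) ≤ r := le_trans hs hsr
  have hrQ : (0:ℚ) < (r:ℚ) := by exact_mod_cast hrZ
  set c : ℤ := ⌈((m - m' : ℤ) : ℚ) / (s : ℚ)⌉ with hc
  set a : ℤ := ⌈((m * r : ℤ) : ℚ) / (s : ℚ)⌉ with ha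
  set b : ℤ := ⌈((m' * r : ℤ) : ℚ) / (s : ℚ)⌉ with hb
  -- bounds on m - m' from c
  have h1 : m - m' ≤ c * s := by
    have h := Int.ceil_le.mp (le_refl c)
    rw [div_le_iff₀ hsQ] at h
    exact_mod_cast h
  have h2 : (c - 1) * s + 1 ≤ m - m' := by
    have h : ((c - 1 : ℤ) : ℚ) < ((m - m' : ℤ) : ℚ) / (s : ℚ) :=
      Int.lt_ceil.mp (by omega)
    rw [lt_div_iff₀ hsQ] at h
    have h' : ((c - 1) * s : ℤ) < (m - m' : ℤ) := by exact_mod_cast h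
    exact Int.add_one_le_iff.mpr h'
  -- upper bound: a ≤ b + c * r
  have hA : a ≤ b + c * r := by
    rw [ha, Int.ceil_le]
    have hble : ((m' * r : ℤ) : ℚ) / (s : ℚ) ≤ (b : ℚ) := Int.le_ceil _
    have key : ((m * r : ℤ) : ℚ) / (s : ℚ) ≤ ((m' * r : ℤ) : ℚ) / (s : ℚ) + ((c * r : ℤ) : ℚ) := by
      rw [div_add' _ _ _ (ne_of_gt hsQ), div_le_div_iff₀ hsQ hsQ]
      have hZ : (m * r : ℤ) * s ≤ (m' * r + c * r * s) * s := by
        have hm : m ≤ m' + c * s := by linarith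
        have hr0 : (0:ℤ) < r := by linarith
        have hs0 : (0:ℤ) < s := by linarith
        nlinarith [mul_le_mul_of_nonneg_right (mul_le_mul_of_nonneg_right hm hr0.le) hs0.le]
      exact_mod_cast hZ
    calc ((m * r : ℤ) : ℚ) / (s : ℚ) ≤ ((m' * r : ℤ) : ℚ) / (s : ℚ) + ((c * r : ℤ) : ℚ) := key
      _ ≤ (b : ℚ) + ((c * r : ℤ) : ℚ) := by linarith
      _ = ((b + c * r : ℤ) : ℚ) := by push_cast; ring
  -- lower bound: b + (c - 1) * r + 1 ≤ a
  have hB : b + (c - 1) * r + 1 ≤ a := by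
    have hb1 : b + 1 ≤ ⌈(((m' + 1) * r : ℤ) : ℚ) / (s : ℚ)⌉ := by
      rw [Int.add_one_le_iff, Int.lt_ceil]
      have h1' : ((m' * r : ℤ) : ℚ) / (s : ℚ) + 1 ≤ (((m' + 1) * r : ℤ) : ℚ) / (s : ℚ) := by
        rw [div_add' _ _ _ (ne_of_gt hsQ), div_le_div_iff₀ hsQ hsQ]
        have hZ : ((m' * r + 1 * s : ℤ)) * s ≤ ((m' + 1) * r : ℤ) * s := by
          have hs0 : (0:ℤ) < s := by linarith
          nlinarith
        exact_mod_cast hZ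
      have h2' : (b : ℚ) < ((m' * r : ℤ) : ℚ) / (s : ℚ) + 1 := by
        have := Int.ceil_lt_add_one (((m' * r : ℤ) : ℚ) / (s : ℚ))
        rw [← hb] at this
        linarith
      linarith
    have hmono : ⌈(((m' + 1) * r : ℤ) : ℚ) / (s : ℚ)⌉ + (c - 1) * r ≤ a := by
      have heq : (⌈(((m' + 1) * r : ℤ) : ℚ) / (s : ℚ)⌉ + (c - 1) * r : ℤ)
          = ⌈(((m' + 1) * r : ℤ) : ℚ) / (s : ℚ) + (((c - 1) * r : ℤ) : ℚ)⌉ := by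
        rw [Int.ceil_add_intCast]
      rw [heq, ha]
      apply Int.ceil_le_ceil
      rw [div_add' _ _ _ (ne_of_gt hsQ), div_le_div_iff₀ hsQ hsQ]
      have hm : m' + 1 + (c - 1) * s ≤ m := by linarith
      have hZ : (((m' + 1) * r + (c - 1) * r * s) * s : ℤ) ≤ (m * r) * s := by
        have hr0 : (0:ℤ) < r := by linarith
        have hs0 : (0:ℤ) < s := by linarith
        nlinarith [mul_le_mul_of_nonneg_right (mul_le_mul_of_nonneg_right hm hr0.le) hs0.le]
      exact_mod_cast hZ
    linarith
  -- conclude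
  symm
  rw [Int.ceil_eq_iff]
  constructor
  · rw [lt_div_iff₀ hrQ]
    have hZ : (c - 1) * r < a - b := by linarith
    have : (((c - 1) * r : ℤ) : ℚ) < ((a - b : ℤ) : ℚ) := by exact_mod_cast hZ
    push_cast at this ⊢
    linarith
  · rw [div_le_iff₀ hrQ]
    have hZ : a - b ≤ c * r := by linarith
    have : ((a - b : ℤ) : ℚ) ≤ ((c * r : ℤ) : ℚ) := by exact_mod_cast hZ
    push_cast at this ⊢
    linarith
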